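/- arXiv:2603.13798 — 2 statements merged into one kernel-verified Lean document; each statement's English description precedes it below -/
import Mathlib

section
/- Let q ∈ (0, 1/2] and let μ be a Borel probability measure on ℝ supported in [1, C] for some C ≥ 1 with ∫ x² dμ ≤ 2·(∫ x dμ)². Then ν := T_q μ satisfies ∫ z² dν ≤ 2·(∫ z dν)². -/
open MeasureTheory ProbabilityTheory Filter

noncomputable def Sfun : ℝ × ℝ → ℝ := fun p => p.1 + p.2

noncomputable def Dfun : ℝ × ℝ × ℝ × ℝ → ℝ := fun p =>
  ((p.1 + p.2.1) * (p.2.2.1 + p.2.2.2)) / (p.1 + p.2.1 + p.2.2.1 + p.2.2.2)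

/-- One-step resistance recursion map on Borel measures on ℝ. -/
noncomputable def Tq (q : ℝ) (μ : Measure ℝ) : Measure ℝ :=
  ENNReal.ofReal (1 - q) • Measure.map Sfun (μ.prod μ) +
    ENNReal.ofReal q • Measure.map Dfun (μ.prod (μ.prod (μ.prod μ)))

/-- μₙ = T_qⁿ δ₁ : law of the two-terminal resistance after n replacement steps. -/
noncomputable def mu (q : ℝ) (n : ℕ) : Measure ℝ := (Tq q)^[n] (Measure.dirac 1)

noncomputable def Dpair : (ℝ × ℝ) × (ℝ × ℝ) → ℝ :=
  fun z => Sfun z.1 * Sfun z.2 / (Sfun z.1 + Sfun z.2)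
lemma Sfun_meas : Measurable Sfun := measurable_fst.add measurable_snd
lemma Dfun_meas : Measurable Dfun := by unfold Dfun; fun_prop
lemma Dpair_meas : Measurable Dpair := by unfold Dpair Sfun; fun_prop

lemma hmu_ae (μ : Measure ℝ) (C : ℝ) (hsupp : μ (Set.Icc 1 C)ᶜ = 0) :
    ∀ᵐ x ∂μ, x ∈ Set.Icc 1 C := by
  rw [ae_iff]; simpa [Set.compl_def] using hsupp

lemma hP2_ae (μ : Measure ℝ) [IsProbabilityMeasure μ] (C : ℝ)
    (hsupp : μ (Set.Icc 1 C)ᶜ = 0) :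
    ∀ᵐ w ∂(μ.prod μ), w.1 ∈ Set.Icc 1 C ∧ w.2 ∈ Set.Icc 1 C := by
  have hbad1 : (μ.prod μ) ((Set.Icc 1 C)ᶜ ×ˢ (Set.univ : Set ℝ)) = 0 := by
    rw [Measure.prod_prod, hsupp, zero_mul]
  have hbad2 : (μ.prod μ) ((Set.univ : Set ℝ) ×ˢ (Set.Icc 1 C)ᶜ) = 0 := by
    rw [Measure.prod_prod, hsupp, mul_zero]
  rw [ae_iff]
  refine measure_mono_null ?_ (measure_union_null hbad1 hbad2)
  intro w hw
  by_cases h1 : w.1 ∈ Set.Icc 1 C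
  · exact Or.inr ⟨trivial, fun h2 => hw ⟨h1, h2⟩⟩
  · exact Or.inl ⟨h1, trivial⟩

lemma hpi_ae (μ : Measure ℝ) [IsProbabilityMeasure μ] (C : ℝ)
    (hsupp : μ (Set.Icc 1 C)ᶜ = 0) :
    ∀ᵐ z ∂((μ.prod μ).prod (μ.prod μ)),
    (z.1.1 ∈ Set.Icc 1 C ∧ z.1.2 ∈ Set.Icc 1 C) ∧
      (z.2.1 ∈ Set.Icc 1 C ∧ z.2.2 ∈ Set.Icc 1 C) := by
  have hB : (μ.prod μ) {w : ℝ × ℝ | ¬ (w.1 ∈ Set.Icc 1 C ∧ w.2 ∈ Set.Icc 1 C)} = 0 :=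
    ae_iff.mp (hP2_ae μ C hsupp)
  have hbad1 : ((μ.prod μ).prod (μ.prod μ))
      ({w : ℝ × ℝ | ¬ (w.1 ∈ Set.Icc 1 C ∧ w.2 ∈ Set.Icc 1 C)} ×ˢ (Set.univ : Set (ℝ × ℝ))) = 0 := by
    rw [Measure.prod_prod, hB, zero_mul]
  have hbad2 : ((μ.prod μ).prod (μ.prod μ))
      ((Set.univ : Set (ℝ × ℝ)) ×ˢ {w : ℝ × ℝ | ¬ (w.1 ∈ Set.Icc 1 C ∧ w.2 ∈ Set.Icc 1 C)}) = 0 := by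
    rw [Measure.prod_prod, hB, mul_zero]
  rw [ae_iff]
  refine measure_mono_null ?_ (measure_union_null hbad1 hbad2)
  intro z hz
  by_cases h1 : (z.1.1 ∈ Set.Icc 1 C ∧ z.1.2 ∈ Set.Icc 1 C)
  · exact Or.inr ⟨trivial, fun h2 => hz ⟨h1, h2⟩⟩
  · exact Or.inl ⟨h1, trivial⟩

lemma int_mu (μ : Measure ℝ) [IsProbabilityMeasure μ] (C : ℝ)
    (hsupp : μ (Set.Icc 1 C)ᶜ = 0) (f : ℝ → ℝ) (hf : Measurable f) (K : ℝ)
    (hK : ∀ x ∈ Set.Icc 1 C, |f x| ≤ K) : Integrable f μ := by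
  refine Integrable.mono' (integrable_const K) hf.aestronglyMeasurable ?_
  filter_upwards [hmu_ae μ C hsupp] with x hx
  simpa [Real.norm_eq_abs] using hK x hx

lemma int_P2 (μ : Measure ℝ) [IsProbabilityMeasure μ] (C : ℝ)
    (hsupp : μ (Set.Icc 1 C)ᶜ = 0) (F : ℝ × ℝ → ℝ) (hF : Measurable F) (K : ℝ)
    (hK : ∀ w : ℝ × ℝ, w.1 ∈ Set.Icc 1 C → w.2 ∈ Set.Icc 1 C → |F w| ≤ K) :
    Integrable F (μ.prod μ) := by
  refine Integrable.mono' (integrable_const K) hF.aestronglyMeasurable ?_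
  filter_upwards [hP2_ae μ C hsupp] with w hw
  simpa [Real.norm_eq_abs] using hK w hw.1 hw.2

lemma int_pi (μ : Measure ℝ) [IsProbabilityMeasure μ] (C : ℝ)
    (hsupp : μ (Set.Icc 1 C)ᶜ = 0) (F : (ℝ × ℝ) × (ℝ × ℝ) → ℝ) (hF : Measurable F) (K : ℝ)
    (hK : ∀ z : (ℝ × ℝ) × (ℝ × ℝ), z.1.1 ∈ Set.Icc 1 C → z.1.2 ∈ Set.Icc 1 C →
      z.2.1 ∈ Set.Icc 1 C → z.2.2 ∈ Set.Icc 1 C → |F z| ≤ K) :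
    Integrable F ((μ.prod μ).prod (μ.prod μ)) := by
  refine Integrable.mono' (integrable_const K) hF.aestronglyMeasurable ?_
  filter_upwards [hpi_ae μ C hsupp] with z hz
  simpa [Real.norm_eq_abs] using hK z hz.1.1 hz.1.2 hz.2.1 hz.2.2

lemma mom_m1 (μ : Measure ℝ) [IsProbabilityMeasure μ] (C : ℝ)
    (hsupp : μ (Set.Icc 1 C)ᶜ = 0) (hC : 1 ≤ C) : 1 ≤ ∫ x, x ∂μ := by
  have hid : Integrable (fun x => x) μ :=
    int_mu μ C hsupp _ measurable_id C (fun x hx => by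
      rw [abs_of_nonneg (by linarith [hx.1])]; exact hx.2)
  have := integral_mono_ae (integrable_const (1:ℝ)) hid
    (by filter_upwards [hmu_ae μ C hsupp] with x hx using hx.1)
  simpa using this

lemma mom_var (μ : Measure ℝ) [IsProbabilityMeasure μ] (C : ℝ)
    (hsupp : μ (Set.Icc 1 C)ᶜ = 0) (hC : 1 ≤ C) : (∫ x, x ∂μ)^2 ≤ ∫ x, x^2 ∂μ := by
  set m := ∫ x, x ∂μ with hmdef
  have hid : Integrable (fun x => x) μ :=
    int_mu μ C hsupp _ measurable_id C (fun x hx => by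
      rw [abs_of_nonneg (by linarith [hx.1])]; exact hx.2)
  have hsq : Integrable (fun x => x^2) μ :=
    int_mu μ C hsupp _ (measurable_id'.pow_const 2) (C^2) (fun x hx => by
      rw [abs_of_nonneg (sq_nonneg x)]
      have h1 : (0:ℝ) ≤ x := by linarith [hx.1]
      nlinarith [hx.2])
  have h0 : 0 ≤ ∫ x, (x - m)^2 ∂μ := integral_nonneg fun x => sq_nonneg _
  have hexp : ∫ x, (x - m)^2 ∂μ = (∫ x, x^2 ∂μ) - 2*m*m + m^2 := by
    have he : (fun x => (x - m)^2) = fun x => x^2 - (2*m)*x + m^2 := by funext x; ring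
    have hI2 : Integrable (fun x : ℝ => (2*m)*x) μ := hid.const_mul (2*m)
    have hI1 : Integrable (fun x : ℝ => x^2 - (2*m)*x) μ := hsq.sub hI2
    rw [he, integral_add hI1 (integrable_const _), integral_sub hsq hI2,
      integral_const_mul, integral_const]
    simp [measure_univ, ← hmdef]
  nlinarith [h0, hexp]

lemma P2_mom1 (μ : Measure ℝ) [IsProbabilityMeasure μ] (C : ℝ)
    (hsupp : μ (Set.Icc 1 C)ᶜ = 0) (hC : 1 ≤ C) :
    ∫ w, Sfun w ∂(μ.prod μ) = 2 * ∫ x, x ∂μ := by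
  have hfst : Integrable (fun w : ℝ × ℝ => w.1) (μ.prod μ) :=
    int_P2 μ C hsupp _ measurable_fst C (fun w h1 h2 => by
      rw [abs_of_nonneg (by linarith [h1.1])]; exact h1.2)
  have hsnd : Integrable (fun w : ℝ × ℝ => w.2) (μ.prod μ) :=
    int_P2 μ C hsupp _ measurable_snd C (fun w h1 h2 => by
      rw [abs_of_nonneg (by linarith [h2.1])]; exact h2.2)
  have h1 : ∫ w : ℝ × ℝ, w.1 ∂(μ.prod μ) = ∫ x, x ∂μ := by
    have := integral_fun_fst (μ := μ) (ν := μ) (f := fun x : ℝ => x)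
    simpa [measure_univ] using this
  have h2 : ∫ w : ℝ × ℝ, w.2 ∂(μ.prod μ) = ∫ x, x ∂μ := by
    have := integral_fun_snd (μ := μ) (ν := μ) (f := fun x : ℝ => x)
    simpa [measure_univ] using this
  have he : (fun w : ℝ × ℝ => Sfun w) = fun w : ℝ × ℝ => w.1 + w.2 := rfl
  rw [he, integral_add hfst hsnd, h1, h2]
  ring

lemma P2_mom2 (μ : Measure ℝ) [IsProbabilityMeasure μ] (C : ℝ)
    (hsupp : μ (Set.Icc 1 C)ᶜ = 0) (hC : 1 ≤ C) :
    ∫ w, (Sfun w)^2 ∂(μ.prod μ) = 2 * (∫ x, x^2 ∂μ) + 2 * (∫ x, x ∂μ)^2 := by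
  have hfst2 : Integrable (fun w : ℝ × ℝ => w.1^2) (μ.prod μ) :=
    int_P2 μ C hsupp _ (measurable_fst.pow_const 2) (C^2) (fun w h1 h2 => by
      rw [abs_of_nonneg (sq_nonneg _)]; nlinarith [h1.1, h1.2])
  have hsnd2 : Integrable (fun w : ℝ × ℝ => w.2^2) (μ.prod μ) :=
    int_P2 μ C hsupp _ (measurable_snd.pow_const 2) (C^2) (fun w h1 h2 => by
      rw [abs_of_nonneg (sq_nonneg _)]; nlinarith [h2.1, h2.2])
  have hcross : Integrable (fun w : ℝ × ℝ => (2:ℝ) * (w.1 * w.2)) (μ.prod μ) :=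
    int_P2 μ C hsupp _ (by fun_prop) (2 * C^2) (fun w h1 h2 => by
      rw [abs_of_nonneg (by nlinarith [h1.1, h2.1] : (0:ℝ) ≤ 2 * (w.1 * w.2))]
      nlinarith [h1.1, h1.2, h2.1, h2.2])
  have h1 : ∫ w : ℝ × ℝ, w.1^2 ∂(μ.prod μ) = ∫ x, x^2 ∂μ := by
    have := integral_fun_fst (μ := μ) (ν := μ) (f := fun x : ℝ => x^2)
    simpa [measure_univ] using this
  have h2 : ∫ w : ℝ × ℝ, w.2^2 ∂(μ.prod μ) = ∫ x, x^2 ∂μ := by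
    have := integral_fun_snd (μ := μ) (ν := μ) (f := fun x : ℝ => x^2)
    simpa [measure_univ] using this
  have hcr : ∫ w : ℝ × ℝ, w.1 * w.2 ∂(μ.prod μ) = (∫ x, x ∂μ) * ∫ x, x ∂μ :=
    integral_prod_mul (f := fun x : ℝ => x) (g := fun x : ℝ => x)
  have he : (fun w : ℝ × ℝ => (Sfun w)^2)
      = fun w : ℝ × ℝ => w.1^2 + ((2:ℝ) * (w.1 * w.2) + w.2^2) := by
    funext w; show (w.1 + w.2)^2 = _; ring
  have hsum : Integrable (fun w : ℝ × ℝ => (2:ℝ) * (w.1 * w.2) + w.2^2) (μ.prod μ) :=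
    hcross.add hsnd2
  rw [he, integral_add hfst2 hsum, integral_add hcross hsnd2,
    integral_const_mul, h1, h2, hcr]
  ring

lemma Dpair_int (μ : Measure ℝ) [IsProbabilityMeasure μ] (C : ℝ)
    (hsupp : μ (Set.Icc 1 C)ᶜ = 0) (hC : 1 ≤ C) :
    Integrable Dpair ((μ.prod μ).prod (μ.prod μ)) := by
  refine int_pi μ C hsupp _ Dpair_meas (2*C) (fun z h1 h2 h3 h4 => ?_)
  have hA1 : 2 ≤ Sfun z.1 := by have := h1.1; have := h2.1; simp only [Sfun]; linarith
  have hA2 : Sfun z.1 ≤ 2*C := by have := h1.2; have := h2.2; simp only [Sfun]; linarith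
  have hB1 : 2 ≤ Sfun z.2 := by have := h3.1; have := h4.1; simp only [Sfun]; linarith
  have hB2 : Sfun z.2 ≤ 2*C := by have := h3.2; have := h4.2; simp only [Sfun]; linarith
  unfold Dpair
  rw [abs_of_nonneg (by positivity)]
  rw [div_le_iff₀ (by linarith)]
  nlinarith

lemma Dpair_sq_int (μ : Measure ℝ) [IsProbabilityMeasure μ] (C : ℝ)
    (hsupp : μ (Set.Icc 1 C)ᶜ = 0) (hC : 1 ≤ C) :
    Integrable (fun z => (Dpair z)^2) ((μ.prod μ).prod (μ.prod μ)) := by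
  refine int_pi μ C hsupp _ (Dpair_meas.pow_const 2) ((2*C)^2) (fun z h1 h2 h3 h4 => ?_)
  have hA1 : 2 ≤ Sfun z.1 := by have := h1.1; have := h2.1; simp only [Sfun]; linarith
  have hA2 : Sfun z.1 ≤ 2*C := by have := h1.2; have := h2.2; simp only [Sfun]; linarith
  have hB1 : 2 ≤ Sfun z.2 := by have := h3.1; have := h4.1; simp only [Sfun]; linarith
  have hB2 : Sfun z.2 ≤ 2*C := by have := h3.2; have := h4.2; simp only [Sfun]; linarith
  have hd : Dpair z ≤ 2*C := by
    unfold Dpair; rw [div_le_iff₀ (by linarith)]; nlinarith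
  have hd0 : 0 ≤ Dpair z := by unfold Dpair; positivity
  rw [abs_of_nonneg (sq_nonneg _)]
  nlinarith

lemma AB_int (μ : Measure ℝ) [IsProbabilityMeasure μ] (C : ℝ)
    (hsupp : μ (Set.Icc 1 C)ᶜ = 0) (hC : 1 ≤ C) :
    Integrable (fun z : (ℝ × ℝ) × (ℝ × ℝ) => Sfun z.1 * Sfun z.2)
      ((μ.prod μ).prod (μ.prod μ)) := by
  refine int_pi μ C hsupp _ (by unfold Sfun; fun_prop) (4*C^2) (fun z h1 h2 h3 h4 => ?_)
  have hA1 : 2 ≤ Sfun z.1 := by have := h1.1; have := h2.1; simp only [Sfun]; linarith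
  have hA2 : Sfun z.1 ≤ 2*C := by have := h1.2; have := h2.2; simp only [Sfun]; linarith
  have hB1 : 2 ≤ Sfun z.2 := by have := h3.1; have := h4.1; simp only [Sfun]; linarith
  have hB2 : Sfun z.2 ≤ 2*C := by have := h3.2; have := h4.2; simp only [Sfun]; linarith
  rw [abs_of_nonneg (by nlinarith)]
  nlinarith

lemma A2B_int (μ : Measure ℝ) [IsProbabilityMeasure μ] (C : ℝ)
    (hsupp : μ (Set.Icc 1 C)ᶜ = 0) (hC : 1 ≤ C) :
    Integrable (fun z : (ℝ × ℝ) × (ℝ × ℝ) => (Sfun z.1)^2 * Sfun z.2)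
      ((μ.prod μ).prod (μ.prod μ)) := by
  refine int_pi μ C hsupp _ (by unfold Sfun; fun_prop) (8*C^3) (fun z h1 h2 h3 h4 => ?_)
  have hA1 : 2 ≤ Sfun z.1 := by have := h1.1; have := h2.1; simp only [Sfun]; linarith
  have hA2 : Sfun z.1 ≤ 2*C := by have := h1.2; have := h2.2; simp only [Sfun]; linarith
  have hB1 : 2 ≤ Sfun z.2 := by have := h3.1; have := h4.1; simp only [Sfun]; linarith
  have hB2 : Sfun z.2 ≤ 2*C := by have := h3.2; have := h4.2; simp only [Sfun]; linarith
  have e1 : (Sfun z.1)^2 ≤ (2*C)^2 := by nlinarith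
  have e2 : (Sfun z.1)^2 * Sfun z.2 ≤ (2*C)^2 * (2*C) :=
    mul_le_mul e1 hB2 (by linarith) (by positivity)
  rw [abs_of_nonneg (by nlinarith)]
  nlinarith [e2]

lemma AB2_int (μ : Measure ℝ) [IsProbabilityMeasure μ] (C : ℝ)
    (hsupp : μ (Set.Icc 1 C)ᶜ = 0) (hC : 1 ≤ C) :
    Integrable (fun z : (ℝ × ℝ) × (ℝ × ℝ) => Sfun z.1 * (Sfun z.2)^2)
      ((μ.prod μ).prod (μ.prod μ)) := by
  refine int_pi μ C hsupp _ (by unfold Sfun; fun_prop) (8*C^3) (fun z h1 h2 h3 h4 => ?_)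
  have hA1 : 2 ≤ Sfun z.1 := by have := h1.1; have := h2.1; simp only [Sfun]; linarith
  have hA2 : Sfun z.1 ≤ 2*C := by have := h1.2; have := h2.2; simp only [Sfun]; linarith
  have hB1 : 2 ≤ Sfun z.2 := by have := h3.1; have := h4.1; simp only [Sfun]; linarith
  have hB2 : Sfun z.2 ≤ 2*C := by have := h3.2; have := h4.2; simp only [Sfun]; linarith
  have e1 : (Sfun z.2)^2 ≤ (2*C)^2 := by nlinarith
  have e2 : Sfun z.1 * (Sfun z.2)^2 ≤ (2*C) * (2*C)^2 :=
    mul_le_mul hA2 e1 (by positivity) (by positivity)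
  rw [abs_of_nonneg (by nlinarith)]
  nlinarith [e2]

lemma pi_I1 (μ : Measure ℝ) [IsProbabilityMeasure μ] (C : ℝ)
    (hsupp : μ (Set.Icc 1 C)ᶜ = 0) (hC : 1 ≤ C) :
    ∫ z, Sfun z.1 * Sfun z.2 ∂((μ.prod μ).prod (μ.prod μ))
      = (2 * ∫ x, x ∂μ) * (2 * ∫ x, x ∂μ) := by
  rw [integral_prod_mul (f := Sfun) (g := Sfun), P2_mom1 μ C hsupp hC]

lemma pi_I2a (μ : Measure ℝ) [IsProbabilityMeasure μ] (C : ℝ)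
    (hsupp : μ (Set.Icc 1 C)ᶜ = 0) (hC : 1 ≤ C) :
    ∫ z, (Sfun z.1)^2 * Sfun z.2 ∂((μ.prod μ).prod (μ.prod μ))
      = (2 * (∫ x, x^2 ∂μ) + 2 * (∫ x, x ∂μ)^2) * (2 * ∫ x, x ∂μ) := by
  rw [integral_prod_mul (f := fun w => (Sfun w)^2) (g := Sfun), P2_mom1 μ C hsupp hC,
    P2_mom2 μ C hsupp hC]

lemma pi_I2b (μ : Measure ℝ) [IsProbabilityMeasure μ] (C : ℝ)
    (hsupp : μ (Set.Icc 1 C)ᶜ = 0) (hC : 1 ≤ C) :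
    ∫ z, Sfun z.1 * (Sfun z.2)^2 ∂((μ.prod μ).prod (μ.prod μ))
      = (2 * ∫ x, x ∂μ) * (2 * (∫ x, x^2 ∂μ) + 2 * (∫ x, x ∂μ)^2) := by
  rw [integral_prod_mul (f := Sfun) (g := fun w => (Sfun w)^2), P2_mom1 μ C hsupp hC,
    P2_mom2 μ C hsupp hC]

lemma pi_d2_le (μ : Measure ℝ) [IsProbabilityMeasure μ] (C : ℝ)
    (hsupp : μ (Set.Icc 1 C)ᶜ = 0) (hC : 1 ≤ C) :
    ∫ z, (Dpair z)^2 ∂((μ.prod μ).prod (μ.prod μ)) ≤ (∫ x, x ∂μ)^2 := by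
  have hmono : ∫ z, (Dpair z)^2 ∂((μ.prod μ).prod (μ.prod μ))
      ≤ ∫ z, Sfun z.1 * Sfun z.2 / 4 ∂((μ.prod μ).prod (μ.prod μ)) := by
    refine integral_mono_ae (Dpair_sq_int μ C hsupp hC) ((AB_int μ C hsupp hC).div_const 4) ?_
    filter_upwards [hpi_ae μ C hsupp] with z hz
    obtain ⟨⟨h1, h2⟩, h3, h4⟩ := hz
    have hA1 : 2 ≤ Sfun z.1 := by have := h1.1; have := h2.1; simp only [Sfun]; linarith
    have hB1 : 2 ≤ Sfun z.2 := by have := h3.1; have := h4.1; simp only [Sfun]; linarith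
    show (Dpair z)^2 ≤ Sfun z.1 * Sfun z.2 / 4
    unfold Dpair
    rw [div_pow, div_le_div_iff₀ (by positivity) (by norm_num)]
    nlinarith [mul_nonneg (by linarith : (0:ℝ) ≤ Sfun z.1) (by linarith : (0:ℝ) ≤ Sfun z.2),
      mul_nonneg (mul_nonneg (by linarith : (0:ℝ) ≤ Sfun z.1) (by linarith : (0:ℝ) ≤ Sfun z.2))
        (sq_nonneg (Sfun z.1 - Sfun z.2))]
  have hval : ∫ z, Sfun z.1 * Sfun z.2 / 4 ∂((μ.prod μ).prod (μ.prod μ))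
      = ((2 * ∫ x, x ∂μ) * (2 * ∫ x, x ∂μ)) / 4 := by
    rw [integral_div, pi_I1 μ C hsupp hC]
  rw [hval] at hmono
  calc ∫ z, (Dpair z)^2 ∂((μ.prod μ).prod (μ.prod μ))
      ≤ ((2 * ∫ x, x ∂μ) * (2 * ∫ x, x ∂μ)) / 4 := hmono
    _ = (∫ x, x ∂μ)^2 := by ring

lemma pi_quad (μ : Measure ℝ) [IsProbabilityMeasure μ] (C : ℝ)
    (hsupp : μ (Set.Icc 1 C)ᶜ = 0) (hC : 1 ≤ C) (t : ℝ) :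
    0 ≤ t^2 * (∫ z, Dpair z ∂((μ.prod μ).prod (μ.prod μ)))
      - 2*t*((2 * ∫ x, x ∂μ) * (2 * ∫ x, x ∂μ))
      + 2*((2 * (∫ x, x^2 ∂μ) + 2 * (∫ x, x ∂μ)^2) * (2 * ∫ x, x ∂μ)) := by
  have hint1 : Integrable (fun z => t^2 * Dpair z) ((μ.prod μ).prod (μ.prod μ)) :=
    (Dpair_int μ C hsupp hC).const_mul (t^2)
  have hint2 : Integrable (fun z : (ℝ × ℝ) × (ℝ × ℝ) => (2*t) * (Sfun z.1 * Sfun z.2))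
      ((μ.prod μ).prod (μ.prod μ)) := (AB_int μ C hsupp hC).const_mul (2*t)
  have hint12 : Integrable (fun z : (ℝ × ℝ) × (ℝ × ℝ) =>
      t^2 * Dpair z - (2*t) * (Sfun z.1 * Sfun z.2)) ((μ.prod μ).prod (μ.prod μ)) :=
    hint1.sub hint2
  have hint3 : Integrable (fun z : (ℝ × ℝ) × (ℝ × ℝ) =>
      (Sfun z.1)^2 * Sfun z.2 + Sfun z.1 * (Sfun z.2)^2) ((μ.prod μ).prod (μ.prod μ)) :=
    (A2B_int μ C hsupp hC).add (AB2_int μ C hsupp hC)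
  have hnn : 0 ≤ ∫ z, ((t^2 * Dpair z - (2*t) * (Sfun z.1 * Sfun z.2))
      + ((Sfun z.1)^2 * Sfun z.2 + Sfun z.1 * (Sfun z.2)^2)) ∂((μ.prod μ).prod (μ.prod μ)) := by
    refine integral_nonneg_of_ae ?_
    filter_upwards [hpi_ae μ C hsupp] with z hz
    obtain ⟨⟨h1, h2⟩, h3, h4⟩ := hz
    have hA1 : 2 ≤ Sfun z.1 := by have := h1.1; have := h2.1; simp only [Sfun]; linarith
    have hB1 : 2 ≤ Sfun z.2 := by have := h3.1; have := h4.1; simp only [Sfun]; linarith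
    have hS : (0:ℝ) < Sfun z.1 + Sfun z.2 := by linarith
    have hkey : (t^2 * Dpair z - (2*t) * (Sfun z.1 * Sfun z.2))
        + ((Sfun z.1)^2 * Sfun z.2 + Sfun z.1 * (Sfun z.2)^2)
        = (Sfun z.1 * Sfun z.2 / (Sfun z.1 + Sfun z.2)) * (t - (Sfun z.1 + Sfun z.2))^2 := by
      unfold Dpair
      field_simp
      ring
    rw [hkey]
    have h0 : (0:ℝ) ≤ Sfun z.1 * Sfun z.2 / (Sfun z.1 + Sfun z.2) := by positivity
    exact mul_nonneg h0 (sq_nonneg _)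
  rw [integral_add hint12 hint3, integral_sub hint1 hint2, integral_const_mul,
    integral_const_mul, integral_add (A2B_int μ C hsupp hC) (AB2_int μ C hsupp hC),
    pi_I1 μ C hsupp hC, pi_I2a μ C hsupp hC, pi_I2b μ C hsupp hC] at hnn
  nlinarith [hnn]


lemma map_D_eq (μ : Measure ℝ) [IsProbabilityMeasure μ] :
    Measure.map Dfun (μ.prod (μ.prod (μ.prod μ))) =
      Measure.map Dpair ((μ.prod μ).prod (μ.prod μ)) := by
  rw [← Measure.prodAssoc_prod, Measure.map_map Dfun_meas (MeasurableEquiv.measurable _)]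
  congr 1
  funext z
  show Dfun (MeasurableEquiv.prodAssoc z) = _
  simp only [Dfun, Dpair, Sfun, MeasurableEquiv.prodAssoc, MeasurableEquiv.coe_mk,
    Equiv.prodAssoc_apply]
  ring_nf

lemma aux_poly (q m s : ℝ) (hq0 : 0 < q) (hq : q ≤ 1/2) (hm : 1 ≤ m)
    (h1 : m^2 ≤ s) (h2 : s ≤ 2*m^2) :
    ((1-q)*(2*s+2*m^2)+q*m^2)*(s+m^2)^2 ≤ 2*((1-q)*(2*m)*(s+m^2)+q*(2*m^3))^2 := by
  obtain ⟨M, u, hM, hu⟩ : ∃ M u : ℝ, M = m^2 ∧ u = s - m^2 := ⟨_, _, rfl, rfl⟩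
  have hM0 : (0:ℝ) < M := by nlinarith
  have hu0 : 0 ≤ u := by rw [hu]; linarith
  have huM : u ≤ M := by rw [hu, hM]; linarith
  have hMu : 0 ≤ M - u := by linarith
  have hA : 0 ≤ 12*M^3+12*M^2*u-3*M*u^2-2*u^3 := by
    nlinarith [mul_nonneg (mul_nonneg hM0.le hM0.le) hMu, mul_nonneg (mul_nonneg hM0.le hu0) hMu,
      mul_nonneg (mul_nonneg hu0 hu0) hMu, mul_nonneg (mul_nonneg hM0.le hM0.le) hM0.le]
  have hB : 0 ≤ 16*M^3-4*M^2*u-9*M*u^2-2*u^3 := by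
    nlinarith [mul_nonneg (mul_nonneg hM0.le hM0.le) hMu, mul_nonneg (mul_nonneg hM0.le hu0) hMu,
      mul_nonneg (mul_nonneg hu0 hu0) hMu, mul_nonneg (mul_nonneg hM0.le hM0.le) hM0.le]
  have hbr : 0 ≤ 16*M^3+20*M^2*u+M*u^2-2*u^3-8*q*M*(M+u)^2 := by
    nlinarith [hA, mul_nonneg (mul_nonneg (by linarith : (0:ℝ) ≤ 1-2*q) hM0.le) (sq_nonneg (M+u))]
  have hp : 0 ≤ (1/2-q)*(16*M^3+20*M^2*u+M*u^2-2*u^3-8*q*M*(M+u)^2) :=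
    mul_nonneg (by linarith) hbr
  have hs : s = M + u := by rw [hM, hu]; ring
  have hm3 : m^3 = m * M := by rw [hM]; ring
  have hm2 : m^2 = M := hM.symm
  rw [hs, hm3, hm2]
  nlinarith [hp, hB, sq_nonneg m, hM0]

set_option maxHeartbeats 1000000 in
theorem stmt15 (q C : ℝ) (hq : q ∈ Set.Ioc (0 : ℝ) (1 / 2)) (hC : 1 ≤ C)
    (μ : Measure ℝ) [IsProbabilityMeasure μ] (hsupp : μ (Set.Icc 1 C)ᶜ = 0)
    (hmom : ∫ x, x ^ 2 ∂μ ≤ 2 * (∫ x, x ∂μ) ^ 2) :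
    ∫ z, z ^ 2 ∂(Tq q μ) ≤ 2 * (∫ z, z ∂(Tq q μ)) ^ 2 := by
  obtain ⟨hq0, hq2⟩ := hq
  obtain ⟨m, hm⟩ : ∃ m, ∫ x, x ∂μ = m := ⟨_, rfl⟩
  obtain ⟨s, hs⟩ : ∃ s, ∫ x, x ^ 2 ∂μ = s := ⟨_, rfl⟩
  obtain ⟨d, hd⟩ : ∃ d, ∫ z, Dpair z ∂((μ.prod μ).prod (μ.prod μ)) = d := ⟨_, rfl⟩
  obtain ⟨d2, hd2'⟩ : ∃ d2, ∫ z, (Dpair z)^2 ∂((μ.prod μ).prod (μ.prod μ)) = d2 := ⟨_, rfl⟩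
  have hm1 : 1 ≤ m := by rw [← hm]; exact mom_m1 μ C hsupp hC
  have hm0 : (0:ℝ) < m := by linarith
  have hsm : m^2 ≤ s := by
    have := mom_var μ C hsupp hC
    rw [hm, hs] at this; exact this
  have hs2 : s ≤ 2*m^2 := by rw [hm, hs] at hmom; linarith [hmom]
  have hpos : (0:ℝ) < s + m^2 := by nlinarith
  -- lower bound on d
  have hq3 := pi_quad μ C hsupp hC (2*(s+m^2)/m)
  rw [hm, hs, hd] at hq3
  have hc : (2*(s+m^2)/m)^2 * d - 2*(2*(s+m^2)/m)*((2*m) * (2*m))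
      + 2*((2 * s + 2 * m^2) * (2*m))
      = (4*(s+m^2)^2*d - 8*m^3*(s+m^2))/m^2 := by
    field_simp
    ring
  have hq3' : 0 ≤ (4*(s+m^2)^2*d - 8*m^3*(s+m^2))/m^2 := by
    rw [← hc]; exact hq3
  have hX : 0 ≤ 4*(s+m^2)^2*d - 8*m^3*(s+m^2) := by
    have h2 := mul_nonneg hq3' (sq_nonneg m)
    rwa [div_mul_cancel₀ _ (by positivity : (m:ℝ)^2 ≠ 0)] at h2
  have hd_lb : 2*m^3/(s+m^2) ≤ d := by
    rw [div_le_iff₀ hpos]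
    nlinarith [hX, hpos]
  have hd2 : d2 ≤ m^2 := by
    have := pi_d2_le μ C hsupp hC
    rw [hm, hd2'] at this; nlinarith [this]
  -- integrability on mapped measures
  have hSint : Integrable Sfun (μ.prod μ) :=
    int_P2 μ C hsupp _ Sfun_meas (2*C) (fun w h1 h2 => by
      simp only [Sfun]
      rw [abs_of_nonneg (by linarith [h1.1, h2.1])]
      linarith [h1.2, h2.2])
  have hSsqint : Integrable (fun w => (Sfun w)^2) (μ.prod μ) :=
    int_P2 μ C hsupp _ (Sfun_meas.pow_const 2) (4*C^2) (fun w h1 h2 => by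
      have e1 : 2 ≤ Sfun w := by simp only [Sfun]; linarith [h1.1, h2.1]
      have e2 : Sfun w ≤ 2*C := by simp only [Sfun]; linarith [h1.2, h2.2]
      rw [abs_of_nonneg (sq_nonneg _)]
      nlinarith)
  have hρ_id : Integrable (fun z : ℝ => z) (Measure.map Sfun (μ.prod μ)) :=
    (integrable_map_measure measurable_id'.aestronglyMeasurable Sfun_meas.aemeasurable).mpr hSint
  have hρ_sq : Integrable (fun z : ℝ => z^2) (Measure.map Sfun (μ.prod μ)) :=
    (integrable_map_measure (measurable_id'.pow_const 2).aestronglyMeasurable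
      Sfun_meas.aemeasurable).mpr hSsqint
  have hκeq := map_D_eq μ
  have hκ_id : Integrable (fun z : ℝ => z)
      (Measure.map Dfun (μ.prod (μ.prod (μ.prod μ)))) := by
    rw [hκeq]
    exact (integrable_map_measure measurable_id'.aestronglyMeasurable Dpair_meas.aemeasurable).mpr
      (Dpair_int μ C hsupp hC)
  have hκ_sq : Integrable (fun z : ℝ => z^2)
      (Measure.map Dfun (μ.prod (μ.prod (μ.prod μ)))) := by
    rw [hκeq]
    exact (integrable_map_measure (measurable_id'.pow_const 2).aestronglyMeasurable
      Dpair_meas.aemeasurable).mpr (Dpair_sq_int μ C hsupp hC)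
  -- values of mapped integrals
  have hρ1 : ∫ z, z ∂(Measure.map Sfun (μ.prod μ)) = 2*m := by
    rw [integral_map Sfun_meas.aemeasurable measurable_id'.aestronglyMeasurable]
    rw [show (∫ w, Sfun w ∂(μ.prod μ)) = 2 * ∫ x, x ∂μ from P2_mom1 μ C hsupp hC, hm]
  have hρ2 : ∫ z, z^2 ∂(Measure.map Sfun (μ.prod μ)) = 2*s + 2*m^2 := by
    rw [integral_map Sfun_meas.aemeasurable (measurable_id'.pow_const 2).aestronglyMeasurable]
    have := P2_mom2 μ C hsupp hC
    rw [hm, hs] at this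
    exact this
  have hκ1 : ∫ z, z ∂(Measure.map Dfun (μ.prod (μ.prod (μ.prod μ)))) = d := by
    rw [hκeq, integral_map Dpair_meas.aemeasurable measurable_id'.aestronglyMeasurable]
    exact hd
  have hκ2 : ∫ z, z^2 ∂(Measure.map Dfun (μ.prod (μ.prod (μ.prod μ)))) = d2 := by
    rw [hκeq, integral_map Dpair_meas.aemeasurable
      (measurable_id'.pow_const 2).aestronglyMeasurable]
    exact hd2'
  -- Tq integrals
  have h1q : (0:ℝ) ≤ 1 - q := by linarith
  have hT1 : ∫ z, z ∂(Tq q μ) = (1-q)*(2*m) + q*d := by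
    rw [Tq, integral_add_measure (hρ_id.smul_measure ENNReal.ofReal_ne_top)
      (hκ_id.smul_measure ENNReal.ofReal_ne_top), integral_smul_measure,
      integral_smul_measure, ENNReal.toReal_ofReal h1q, ENNReal.toReal_ofReal hq0.le,
      smul_eq_mul, smul_eq_mul, hρ1, hκ1]
  have hT2 : ∫ z, z^2 ∂(Tq q μ) = (1-q)*(2*s+2*m^2) + q*d2 := by
    rw [Tq, integral_add_measure (hρ_sq.smul_measure ENNReal.ofReal_ne_top)
      (hκ_sq.smul_measure ENNReal.ofReal_ne_top), integral_smul_measure,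
      integral_smul_measure, ENNReal.toReal_ofReal h1q, ENNReal.toReal_ofReal hq0.le,
      smul_eq_mul, smul_eq_mul, hρ2, hκ2]
  rw [hT2, hT1]
  -- final algebra
  have hrw : (1-q)*(2*m) + q*(2*m^3/(s+m^2))
      = ((1-q)*(2*m)*(s+m^2) + q*(2*m^3))/(s+m^2) := by
    field_simp
  have hkey : (1-q)*(2*s+2*m^2) + q*m^2 ≤ 2*((1-q)*(2*m) + q*(2*m^3/(s+m^2)))^2 := by
    rw [hrw, div_pow]
    rw [show 2*(((1-q)*(2*m)*(s+m^2) + q*(2*m^3))^2/(s+m^2)^2)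
      = (2*((1-q)*(2*m)*(s+m^2) + q*(2*m^3))^2)/(s+m^2)^2 from by ring]
    rw [le_div_iff₀ (by positivity)]
    nlinarith [aux_poly q m s hq0 hq2 hm1 hsm hs2]
  have hL0 : 0 ≤ (1-q)*(2*m) + q*(2*m^3/(s+m^2)) := by
    have h3 : (0:ℝ) ≤ 2*m^3/(s+m^2) := by positivity
    have h4 : (0:ℝ) ≤ (1-q)*(2*m) := mul_nonneg (by linarith) (by linarith)
    have h5 : (0:ℝ) ≤ q*(2*m^3/(s+m^2)) := mul_nonneg hq0.le h3
    linarith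
  have hmono : (1-q)*(2*m) + q*(2*m^3/(s+m^2)) ≤ (1-q)*(2*m) + q*d := by
    nlinarith [hd_lb]
  have hsqm : ((1-q)*(2*m) + q*(2*m^3/(s+m^2)))^2 ≤ ((1-q)*(2*m) + q*d)^2 :=
    pow_le_pow_left₀ hL0 hmono 2
  nlinarith [hkey, hsqm, hd2, hq0.le]
end

section
/- Let X be a strictly positive random variable such that both X and 1/X are integrable. Then for every t ≥ 0, P( |log X − E[log X]| ≥ t ) ≤ 2 · E[X] · E[1/X] · e^{−t}. -/
/-! With `Y = log X`, Markov's inequality applied to `e^Y` (resp. `e^{-Y}`) bounds each tail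
`P(±(Y - E Y) ≥ t)` by `E[e^{±Y}] e^{∓E Y} e^{-t}`, and Jensen's inequality
`e^{∓E Y} ≤ E[e^{∓Y}]` turns this into `E[X] E[1/X] e^{-t}`. -/

open MeasureTheory ProbabilityTheory Real

lemma Real.abs_log_le_add_inv {x : ℝ} (hx : 0 < x) : |log x| ≤ x + x⁻¹ := by
  have h_log := log_le_sub_one_of_pos hx
  have h_log_inv := log_le_sub_one_of_pos (inv_pos.mpr hx)
  rw [log_inv] at h_log_inv
  exact abs_le.mpr ⟨by linarith, by linarith [inv_pos.mpr hx]⟩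

lemma integrable_log_of_integrable_inv {Ω : Type*} [MeasurableSpace Ω] {μ : Measure Ω}
    {X : Ω → ℝ} (hpos : ∀ᵐ ω ∂μ, 0 < X ω) (hX : Integrable X μ) (hXinv : Integrable (fun ω => (X ω)⁻¹) μ) :
    Integrable (fun ω => log (X ω)) μ := by
  refine (hX.add hXinv).mono hX.aemeasurable.log.aestronglyMeasurable ?_
  filter_upwards [hpos] with ω hω
  rw [Pi.add_apply, norm_eq_abs, norm_eq_abs, abs_of_pos (add_pos hω (inv_pos.mpr hω))]
  exact abs_log_le_add_inv hω

section

variable {Ω : Type*} [MeasurableSpace Ω] {μ : Measure Ω} [IsProbabilityMeasure μ] {Y : Ω → ℝ}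

lemma exp_integral_le_integral_exp (hY : Integrable Y μ)
    (hexp : Integrable (fun ω => exp (Y ω)) μ) :
    exp (∫ ω, Y ω ∂μ) ≤ ∫ ω, exp (Y ω) ∂μ :=
  convexOn_exp.map_integral_le continuous_exp.continuousOn isClosed_univ
    (.of_forall fun _ => Set.mem_univ _) hY hexp

lemma measureReal_le_sub_integral_le (hY : Integrable Y μ)
    (hexp : Integrable (fun ω => exp (Y ω)) μ) (hexp_neg : Integrable (fun ω => exp (-Y ω)) μ)
    (t : ℝ) :
    μ.real {ω | t ≤ Y ω - ∫ ω', Y ω' ∂μ} ≤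
      (∫ ω, exp (Y ω) ∂μ) * (∫ ω, exp (-Y ω) ∂μ) * exp (-t) := by
  set m := ∫ ω, Y ω ∂μ
  have h_int : Integrable (fun ω => exp (1 * (Y ω + -m))) μ := by
    simpa only [one_mul, exp_add] using hexp.mul_const (exp (-m))
  have h_jensen : exp (-m) ≤ ∫ ω, exp (-Y ω) ∂μ := by
    simpa only [m, ← integral_neg] using
      exp_integral_le_integral_exp (Y := fun ω => -Y ω) hY.neg hexp_neg
  calc μ.real {ω | t ≤ Y ω - m}
      ≤ exp (-1 * t) * mgf (fun ω => Y ω + -m) μ 1 := by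
        simpa only [← sub_eq_add_neg] using measure_ge_le_exp_mul_mgf t zero_le_one h_int
    _ = (∫ ω, exp (Y ω) ∂μ) * exp (-m) * exp (-t) := by
        rw [mgf_add_const, mgf]
        simp only [one_mul, neg_mul]
        ring
    _ ≤ (∫ ω, exp (Y ω) ∂μ) * (∫ ω, exp (-Y ω) ∂μ) * exp (-t) := by
        have : 0 ≤ ∫ ω, exp (Y ω) ∂μ := integral_nonneg fun _ => (exp_pos _).le
        gcongr

lemma measureReal_le_abs_sub_integral_le (hY : Integrable Y μ)
    (hexp : Integrable (fun ω => exp (Y ω)) μ) (hexp_neg : Integrable (fun ω => exp (-Y ω)) μ)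
    (t : ℝ) :
    μ.real {ω | t ≤ |Y ω - ∫ ω', Y ω' ∂μ|} ≤
      2 * (∫ ω, exp (Y ω) ∂μ) * (∫ ω, exp (-Y ω) ∂μ) * exp (-t) := by
  have h_upper := measureReal_le_sub_integral_le hY hexp hexp_neg t
  have h_lower := measureReal_le_sub_integral_le (Y := fun ω => -Y ω) hY.neg hexp_neg
    (by simpa only [neg_neg] using hexp) t
  simp only [neg_neg, integral_neg, sub_neg_eq_add] at h_lower
  have h_split : {ω | t ≤ |Y ω - ∫ ω', Y ω' ∂μ|} ⊆
      {ω | t ≤ Y ω - ∫ ω', Y ω' ∂μ} ∪ {ω | t ≤ -Y ω + ∫ ω', Y ω' ∂μ} := by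
    intro ω (hω : t ≤ |_|)
    rcases le_abs'.mp hω with h | h
    · exact Or.inr (show t ≤ _ by linarith)
    · exact Or.inl h
  calc μ.real {ω | t ≤ |Y ω - ∫ ω', Y ω' ∂μ|}
      ≤ μ.real {ω | t ≤ Y ω - ∫ ω', Y ω' ∂μ} + μ.real {ω | t ≤ -Y ω + ∫ ω', Y ω' ∂μ} :=
        (measureReal_mono h_split).trans (measureReal_union_le _ _)
    _ ≤ _ := by linarith

end

theorem stmt19_general {Ω : Type} [MeasurableSpace Ω] (P : Measure Ω) [IsProbabilityMeasure P]
    (X : Ω → ℝ) (hpos : ∀ᵐ ω ∂P, 0 < X ω)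
    (hX : Integrable X P) (hXinv : Integrable (fun ω => (X ω)⁻¹) P)
    (t : ℝ) :
    (P {ω | t ≤ |Real.log (X ω) - ∫ ω', Real.log (X ω') ∂P|}).toReal ≤
      2 * (∫ ω, X ω ∂P) * (∫ ω, (X ω)⁻¹ ∂P) * Real.exp (-t) := by
  have h_exp : (fun ω => exp (log (X ω))) =ᵐ[P] X := by
    filter_upwards [hpos] with ω hω using exp_log hω
  have h_exp_neg : (fun ω => exp (-log (X ω))) =ᵐ[P] fun ω => (X ω)⁻¹ := by
    filter_upwards [hpos] with ω hω using by rw [exp_neg, exp_log hω]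
  have h_tail := measureReal_le_abs_sub_integral_le
    (integrable_log_of_integrable_inv hpos hX hXinv)
    (hX.congr h_exp.symm) (hXinv.congr h_exp_neg.symm) t
  rwa [integral_congr_ae h_exp, integral_congr_ae h_exp_neg] at h_tail

theorem stmt19 {Ω : Type} [MeasurableSpace Ω] (P : Measure Ω) [IsProbabilityMeasure P]
    (X : Ω → ℝ) (hmX : Measurable X) (hpos : ∀ᵐ ω ∂P, 0 < X ω)
    (hX : Integrable X P) (hXinv : Integrable (fun ω => (X ω)⁻¹) P)
    (t : ℝ) (ht : 0 ≤ t) :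
    (P {ω | t ≤ |Real.log (X ω) - ∫ ω', Real.log (X ω') ∂P|}).toReal ≤
      2 * (∫ ω, X ω ∂P) * (∫ ω, (X ω)⁻¹ ∂P) * Real.exp (-t) :=
  stmt19_general P X hpos hX hXinv t
end
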